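/- arXiv:2109.05254 — 3 statements merged into one kernel-verified Lean document; each statement's English description precedes it below -/
import Mathlib

section
/- Let I ⊆ ℝ be an open interval, u : I → ℝ a C² function, and v = (v₁,v₂,v₃) ∈ ℝ³. Define X(s,t) = (s, u(s), t) (a cylindrical surface with rulings parallel to the timelike vector (0,0,1)). Then EG − F² = −(1 + u'(s)²) < 0 at every point (so the surface is timelike and non-degenerate), and X satisfies the translating soliton equation with respect to v at every point of I × ℝ if and only if u''(s) = (1 + u'(s)²)(v₂ − v₁ u'(s)) for all s ∈ I. -/
noncomputable section

/-- The Lorentzian (Minkowski) inner product on ℝ³: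
`⟨a,b⟩ = a₁b₁ + a₂b₂ − a₃b₃`. -/
def mink (a b : Fin 3 → ℝ) : ℝ := a 0 * b 0 + a 1 * b 1 - a 2 * b 2

/-- Determinant of the 3×3 matrix with rows `a`, `b`, `c`. -/
def det3 (a b c : Fin 3 → ℝ) : ℝ :=
  a 0 * (b 1 * c 2 - b 2 * c 1) - a 1 * (b 0 * c 2 - b 2 * c 0)
    + a 2 * (b 0 * c 1 - b 1 * c 0)

/-- Partial derivative `X_s` of a parametrized surface `X(s,t)`. -/
def pS (X : ℝ → ℝ → Fin 3 → ℝ) (s t : ℝ) : Fin 3 → ℝ := deriv (fun a => X a t) s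

/-- Partial derivative `X_t`. -/
def pT (X : ℝ → ℝ → Fin 3 → ℝ) (s t : ℝ) : Fin 3 → ℝ := deriv (fun b => X s b) t

/-- Second partial derivative `X_ss`. -/
def pSS (X : ℝ → ℝ → Fin 3 → ℝ) (s t : ℝ) : Fin 3 → ℝ := deriv (fun a => pS X a t) s

/-- Mixed second partial derivative `X_st`. -/
def pST (X : ℝ → ℝ → Fin 3 → ℝ) (s t : ℝ) : Fin 3 → ℝ := deriv (fun a => pT X a t) s

/-- Second partial derivative `X_tt`. -/
def pTT (X : ℝ → ℝ → Fin 3 → ℝ) (s t : ℝ) : Fin 3 → ℝ := deriv (fun b => pT X s b) t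

/-- Coefficient `E = ⟨X_s, X_s⟩` of the first fundamental form. -/
def coefE (X : ℝ → ℝ → Fin 3 → ℝ) (s t : ℝ) : ℝ := mink (pS X s t) (pS X s t)

/-- Coefficient `F = ⟨X_s, X_t⟩` of the first fundamental form. -/
def coefF (X : ℝ → ℝ → Fin 3 → ℝ) (s t : ℝ) : ℝ := mink (pS X s t) (pT X s t)

/-- Coefficient `G = ⟨X_t, X_t⟩` of the first fundamental form. -/
def coefG (X : ℝ → ℝ → Fin 3 → ℝ) (s t : ℝ) : ℝ := mink (pT X s t) (pT X s t)

/-- `EG − F²` at `(s,t)`. -/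
def disc (X : ℝ → ℝ → Fin 3 → ℝ) (s t : ℝ) : ℝ :=
  coefE X s t * coefG X s t - coefF X s t ^ 2

/-- The translating soliton equation with respect to the velocity `v` at the point `(s,t)`:
`E·det(X_s,X_t,X_tt) − 2F·det(X_s,X_t,X_st) + G·det(X_s,X_t,X_ss)
  = −|EG − F²|·det(X_s,X_t,v)`. -/
def SolitonEqAt (X : ℝ → ℝ → Fin 3 → ℝ) (v : Fin 3 → ℝ) (s t : ℝ) : Prop :=
  coefE X s t * det3 (pS X s t) (pT X s t) (pTT X s t)
    - 2 * coefF X s t * det3 (pS X s t) (pT X s t) (pST X s t)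
    + coefG X s t * det3 (pS X s t) (pT X s t) (pSS X s t)
  = -|disc X s t| * det3 (pS X s t) (pT X s t) v

/-! The cylinder has the constant ruling direction `X_t = (0,0,1)`, so `X_tt = X_st = 0` and
only the `G · det(X_s, X_t, X_ss)` term survives on the left. With `X_s = (1, u', 0)` one gets
`E = 1 + u'²`, `F = 0`, `G = -1`, whence `EG - F² = -(1 + u'²) < 0`, and the soliton equation
reduces to `u'' = (1 + u'²)(v₂ - v₁u')`, which no longer involves `t`. -/

open Filter Topology

def cylinder (u : ℝ → ℝ) : ℝ → ℝ → Fin 3 → ℝ := fun s t => ![s, u s, t]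

theorem hasDerivAt_vecCons₃ {f g h : ℝ → ℝ} {f' g' h' x : ℝ} (hf : HasDerivAt f f' x)
    (hg : HasDerivAt g g' x) (hh : HasDerivAt h h' x) :
    HasDerivAt (fun a => ![f a, g a, h a]) ![f', g', h'] x := by
  rw [hasDerivAt_pi]
  intro i
  fin_cases i
  exacts [hf, hg, hh]

namespace cylinder

variable {u : ℝ → ℝ} {s : ℝ}

theorem pT_eq (u : ℝ → ℝ) (s t : ℝ) : pT (cylinder u) s t = ![0, 0, 1] :=
  (hasDerivAt_vecCons₃ (hasDerivAt_const t s) (hasDerivAt_const t (u s))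
    (hasDerivAt_id t)).deriv

theorem pTT_eq (u : ℝ → ℝ) (s t : ℝ) : pTT (cylinder u) s t = 0 := by
  simp only [pTT, pT_eq, deriv_const]

theorem pST_eq (u : ℝ → ℝ) (s t : ℝ) : pST (cylinder u) s t = 0 := by
  simp only [pST, pT_eq, deriv_const]

theorem pS_eq (hu : DifferentiableAt ℝ u s) (t : ℝ) :
    pS (cylinder u) s t = ![1, deriv u s, 0] :=
  (hasDerivAt_vecCons₃ (hasDerivAt_id s) hu.hasDerivAt (hasDerivAt_const s t)).deriv

theorem pSS_eq (hu : ∀ᶠ a in 𝓝 s, DifferentiableAt ℝ u a)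
    (hu' : DifferentiableAt ℝ (deriv u) s) (t : ℝ) :
    pSS (cylinder u) s t = ![0, deriv (deriv u) s, 0] := by
  have hpS : (fun a => pS (cylinder u) a t) =ᶠ[𝓝 s] fun a => ![1, deriv u a, 0] :=
    hu.mono fun a ha => pS_eq ha t
  rw [pSS, hpS.deriv_eq]
  exact (hasDerivAt_vecCons₃ (hasDerivAt_const s 1) hu'.hasDerivAt
    (hasDerivAt_const s 0)).deriv

theorem disc_eq (hu : DifferentiableAt ℝ u s) (t : ℝ) :
    disc (cylinder u) s t = -(1 + deriv u s ^ 2) := by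
  simp only [disc, coefE, coefF, coefG, pS_eq hu, pT_eq, mink, Matrix.cons_val_zero,
    Matrix.cons_val_one, Matrix.cons_val_two, Matrix.head_cons, Matrix.tail_cons]
  ring

theorem disc_neg (hu : DifferentiableAt ℝ u s) (t : ℝ) : disc (cylinder u) s t < 0 := by
  rw [disc_eq hu]
  exact neg_neg_of_pos (by positivity)

theorem solitonEqAt_iff (hu : ∀ᶠ a in 𝓝 s, DifferentiableAt ℝ u a)
    (hu' : DifferentiableAt ℝ (deriv u) s) (v₁ v₂ v₃ t : ℝ) :
    SolitonEqAt (cylinder u) ![v₁, v₂, v₃] s t ↔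
      deriv (deriv u) s = (1 + deriv u s ^ 2) * (v₂ - v₁ * deriv u s) := by
  have habs : |disc (cylinder u) s t| = 1 + deriv u s ^ 2 := by
    rw [abs_of_neg (disc_neg hu.self_of_nhds t), disc_eq hu.self_of_nhds, neg_neg]
  rw [SolitonEqAt, habs]
  simp only [coefE, coefF, coefG, pS_eq hu.self_of_nhds, pT_eq, pTT_eq, pST_eq,
    pSS_eq hu hu', mink, det3, Matrix.cons_val_zero, Matrix.cons_val_one, Matrix.cons_val_two,
    Matrix.head_cons, Matrix.tail_cons, Pi.zero_apply]
  constructor <;> intro h <;> linarith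

end cylinder

theorem stmt2_general (I : Set ℝ) (hIopen : IsOpen I)
    (u : ℝ → ℝ) (hu : ContDiffOn ℝ 2 u I)
    (v₁ v₂ v₃ : ℝ) :
    (∀ s ∈ I, ∀ t : ℝ,
        disc (fun s t => ![s, u s, t]) s t = -(1 + (deriv u s) ^ 2) ∧
        disc (fun s t => ![s, u s, t]) s t < 0) ∧
    ((∀ s ∈ I, ∀ t : ℝ,
        SolitonEqAt (fun s t => ![s, u s, t]) ![v₁, v₂, v₃] s t) ↔
      (∀ s ∈ I,
        deriv (deriv u) s = (1 + (deriv u s) ^ 2) * (v₂ - v₁ * deriv u s))) := by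
  have hu₁ : ∀ s ∈ I, ∀ᶠ a in 𝓝 s, DifferentiableAt ℝ u a := fun s hs =>
    eventually_of_mem (hIopen.mem_nhds hs) fun a ha =>
      (hu.differentiableOn two_ne_zero).differentiableAt (hIopen.mem_nhds ha)
  have hu₂ : ∀ s ∈ I, DifferentiableAt ℝ (deriv u) s := fun s hs =>
    ((hu.deriv_of_isOpen (m := 1) hIopen (by norm_num)).differentiableOn
      one_ne_zero).differentiableAt (hIopen.mem_nhds hs)
  refine ⟨fun s hs t => ⟨cylinder.disc_eq (hu₁ s hs).self_of_nhds t,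
    cylinder.disc_neg (hu₁ s hs).self_of_nhds t⟩, ⟨fun h s hs => ?_, fun h s hs t => ?_⟩⟩
  · exact (cylinder.solitonEqAt_iff (hu₁ s hs) (hu₂ s hs) v₁ v₂ v₃ 0).1 (h s hs 0)
  · exact (cylinder.solitonEqAt_iff (hu₁ s hs) (hu₂ s hs) v₁ v₂ v₃ t).2 (h s hs)

/-- For the cylindrical surface `X(s,t) = (s, u(s), t)` with timelike rulings
`(0,0,1)` over an open interval `I`: `EG − F² = −(1 + u'²) < 0` everywhere, and the
translating soliton equation w.r.t. `v = (v₁,v₂,v₃)` holds on `I × ℝ` iff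
`u'' = (1 + u'²)(v₂ − v₁u')` on `I`. -/
theorem stmt2 (I : Set ℝ) (hIopen : IsOpen I) (hIconn : I.OrdConnected)
    (u : ℝ → ℝ) (hu : ContDiffOn ℝ 2 u I)
    (v₁ v₂ v₃ : ℝ) :
    (∀ s ∈ I, ∀ t : ℝ,
        disc (fun s t => ![s, u s, t]) s t = -(1 + (deriv u s) ^ 2) ∧
        disc (fun s t => ![s, u s, t]) s t < 0) ∧
    ((∀ s ∈ I, ∀ t : ℝ,
        SolitonEqAt (fun s t => ![s, u s, t]) ![v₁, v₂, v₃] s t) ↔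
      (∀ s ∈ I,
        deriv (deriv u) s = (1 + (deriv u s) ^ 2) * (v₂ - v₁ * deriv u s))) :=
  stmt2_general I hIopen u hu v₁ v₂ v₃
end
end

section
/- (Key lemma in the proof of Theorem 2.) Let I ⊆ ℝ be an open interval and w : I → ℝ³ a C² map with ⟨w(s),w(s)⟩ = 0 and ⟨w'(s),w'(s)⟩ = 1 for all s ∈ I, where ⟨,⟩ is the Lorentzian inner product. If v ∈ ℝ³ satisfies det(w'(s), w(s), v) = 0 for all s ∈ I, then for every s ∈ I the vector v is a scalar multiple of w(s). -/
noncomputable section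

/-!
Along a unit-speed null curve `w`, differentiating `⟨w,w⟩ = 0` and `⟨w',w'⟩ = 1` gives
`⟨w,w'⟩ = ⟨w',w''⟩ = 0` and `⟨w,w''⟩ = -1`. The Gram determinant of `(w, w', w'')` is then `-1`,
and since the Lorentzian Gram determinant equals `-det²`, these three vectors form a basis.
Differentiating `det(w', w, v) = 0` gives `det(w'', w, v) = 0`, so by Cramer's rule `v` has no
component along `w'` or `w''`.
-/

section Algebra

variable (a b c v : Fin 3 → ℝ)

theorem mink_comm : mink a b = mink b a := by
  simp only [mink]; ring

theorem det3_self_left : det3 a a c = 0 := by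
  simp only [det3]; ring

theorem det3_swap_left : det3 b a c = -det3 a b c := by
  simp only [det3]; ring

theorem det3_cycle : det3 a b c = det3 c a b := by
  simp only [det3]; ring

theorem det3_sq_eq_neg_gram : det3 a b c ^ 2 =
    -(mink a a * (mink b b * mink c c - mink b c ^ 2)
      - mink a b * (mink a b * mink c c - mink b c * mink a c)
      + mink a c * (mink a b * mink b c - mink b b * mink a c)) := by
  simp only [det3, mink]; ring

theorem det3_smul_eq : det3 a b c • v = det3 v b c • a + det3 a v c • b + det3 a b v • c := by
  funext i
  fin_cases i <;>
    · simp only [det3, Pi.add_apply, Pi.smul_apply, smul_eq_mul, Fin.zero_eta, Fin.mk_one,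
        Fin.reduceFinMk]
      ring

variable {a b c v}

theorem det3_sq_eq_one_of_null_frame (haa : mink a a = 0) (hbb : mink b b = 1)
    (hab : mink a b = 0) (hbc : mink b c = 0) (hac : mink a c = -1) : det3 a b c ^ 2 = 1 := by
  rw [det3_sq_eq_neg_gram, haa, hbb, hab, hbc, hac]; ring

theorem exists_eq_smul_of_det3_eq_zero (habc : det3 a b c ≠ 0) (hb : det3 a v c = 0)
    (hc : det3 a b v = 0) : ∃ k : ℝ, v = k • a := by
  have hv := det3_smul_eq a b c v
  rw [hb, hc, zero_smul, zero_smul, add_zero, add_zero] at hv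
  refine ⟨(det3 a b c)⁻¹ * det3 v b c, ?_⟩
  rw [mul_smul, ← hv, inv_smul_smul₀ habc]

end Algebra

section Calculus

variable {f g : ℝ → Fin 3 → ℝ} {f' g' : Fin 3 → ℝ} {t : ℝ}

theorem HasDerivAt.mink (hf : HasDerivAt f f' t) (hg : HasDerivAt g g' t) :
    HasDerivAt (fun u => mink (f u) (g u)) (mink f' (g t) + mink (f t) g') t := by
  have hfi := hasDerivAt_pi.1 hf
  have hgi := hasDerivAt_pi.1 hg
  unfold _root_.mink
  exact ((((hfi 0).mul (hgi 0)).add ((hfi 1).mul (hgi 1))).sub ((hfi 2).mul (hgi 2))).congr_deriv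
    (by ring)

theorem HasDerivAt.det3_const_right (hf : HasDerivAt f f' t) (hg : HasDerivAt g g' t)
    (v : Fin 3 → ℝ) :
    HasDerivAt (fun u => det3 (f u) (g u) v) (det3 f' (g t) v + det3 (f t) g' v) t := by
  have hfi := hasDerivAt_pi.1 hf
  have hgi := hasDerivAt_pi.1 hg
  unfold _root_.det3
  refine ((((hfi 0).mul (((hgi 1).mul_const (v 2)).sub ((hgi 2).mul_const (v 1)))).sub
    ((hfi 1).mul (((hgi 0).mul_const (v 2)).sub ((hgi 2).mul_const (v 0))))).add
    ((hfi 2).mul (((hgi 0).mul_const (v 1)).sub ((hgi 1).mul_const (v 0))))).congr_deriv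
    (by simp only [Pi.sub_apply]; ring)

theorem HasDerivAt.eq_zero_of_eqOn_const {I : Set ℝ} {φ : ℝ → ℝ} {D k : ℝ} (hI : IsOpen I)
    (ht : t ∈ I) (hφ : HasDerivAt φ D t) (hk : ∀ x ∈ I, φ x = k) : D = 0 :=
  hφ.unique <| (hasDerivAt_const t k).congr_of_eventuallyEq <|
    Filter.eventuallyEq_of_mem (hI.mem_nhds ht) hk

end Calculus

theorem stmt11_general (I : Set ℝ) (hIopen : IsOpen I)
    (w : ℝ → Fin 3 → ℝ) (hw : ContDiffOn ℝ 2 w I)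
    (hw0 : ∀ s ∈ I, mink (w s) (w s) = 0)
    (hw1 : ∀ s ∈ I, mink (deriv w s) (deriv w s) = 1)
    (v : Fin 3 → ℝ)
    (hv : ∀ s ∈ I, det3 (deriv w s) (w s) v = 0) :
    ∀ s ∈ I, ∃ c : ℝ, v = c • w s := by
  have hw' : ∀ t ∈ I, HasDerivAt w (deriv w t) t := fun t ht =>
    ((hw.differentiableOn two_ne_zero).differentiableAt (hIopen.mem_nhds ht)).hasDerivAt
  have hw'' : ∀ t ∈ I, HasDerivAt (deriv w) (deriv (deriv w) t) t := fun t ht =>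
    (((hw.deriv_of_isOpen hIopen (by norm_num)).differentiableOn one_ne_zero).differentiableAt
      (hIopen.mem_nhds ht)).hasDerivAt
  have hw_w' : ∀ t ∈ I, mink (w t) (deriv w t) = 0 := fun t ht => by
    have := ((hw' t ht).mink (hw' t ht)).eq_zero_of_eqOn_const hIopen ht hw0
    rw [mink_comm] at this; linarith
  intro s hs
  have hw'_w'' := ((hw'' s hs).mink (hw'' s hs)).eq_zero_of_eqOn_const hIopen hs hw1
  have hw_w'' := ((hw' s hs).mink (hw'' s hs)).eq_zero_of_eqOn_const hIopen hs hw_w'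
  have hw''_v := ((hw'' s hs).det3_const_right (hw' s hs) v).eq_zero_of_eqOn_const hIopen hs hv
  rw [mink_comm (deriv (deriv w) s)] at hw'_w''
  rw [hw1 s hs] at hw_w''
  rw [det3_self_left, add_zero] at hw''_v
  have hdet := det3_sq_eq_one_of_null_frame (c := deriv (deriv w) s) (hw0 s hs) (hw1 s hs)
    (hw_w' s hs) (by linarith) (by linarith)
  refine exists_eq_smul_of_det3_eq_zero (b := deriv w s) (c := deriv (deriv w) s) ?_ ?_ ?_
  · rintro h; simp [h] at hdet
  · rw [det3_cycle, hw''_v]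
  · rw [det3_swap_left, hv s hs, neg_zero]

/-- key lemma in the proof of Theorem 2: if `w` is a C² map on an open
interval `I` with `⟨w,w⟩ = 0` and `⟨w',w'⟩ = 1` (Lorentzian products), and `v` satisfies
`det(w'(s), w(s), v) = 0` for all `s ∈ I`, then `v` is a scalar multiple of `w(s)` for
every `s ∈ I`. -/
theorem stmt11 (I : Set ℝ) (hIopen : IsOpen I) (hIconn : I.OrdConnected)
    (w : ℝ → Fin 3 → ℝ) (hw : ContDiffOn ℝ 2 w I)
    (hw0 : ∀ s ∈ I, mink (w s) (w s) = 0)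
    (hw1 : ∀ s ∈ I, mink (deriv w s) (deriv w s) = 1)
    (v : Fin 3 → ℝ)
    (hv : ∀ s ∈ I, det3 (deriv w s) (w s) v = 0) :
    ∀ s ∈ I, ∃ c : ℝ, v = c • w s :=
  stmt11_general I hIopen w hw hw0 hw1 v hv
end
end

section
/- (Theorem 4, case v = (1,v₂,v₂), ε = 1, Φ = 1/(s−v₂): explicit non-cylindrical ruled translating soliton.) Fix v₂, b ∈ ℝ and define, for s > v₂: Φ(s) = 1/(s − v₂), x(s) = log(s − v₂) − v₂/(s − v₂), z(s) = v₂·log(s − v₂) − (1 + v₂²)/(2(s − v₂)) + b·s, and γ(s) = (x(s), z(s) + Φ(s), z(s)). Then X(s,t) = γ(s) + t·(1, s, s) satisfies ⟨γ'(s), (1,s,s)⟩ = 0, and at every point (s,t) with s > v₂ and ⟨X_s, X_s⟩ < 0, X is non-degenerate with EG − F² = ⟨X_s,X_s⟩ < 0 and satisfies the translating soliton equation with respect to v = (1, v₂, v₂). -/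
noncomputable section

/-!
The ruling `w(s) = (1, s, s)` satisfies `⟨w, w⟩ = 1` and `⟨w', w⟩ = 0`, and the curve satisfies
`⟨γ', w⟩ = 0`; hence `F = 0`, `G = 1` and `EG − F² = E`. Since moreover `X_tt = 0`, the soliton
equation at a point with `E < 0` reduces to `det(X_s, w, X_ss) = E · det(X_s, w, v)`. Writing
`γ(s) = log(s − v₂) • v + (s − v₂)⁻¹ • B + s • C` with constant vectors `B`, `C`, both sides are
rational in `s` and polynomial in `t`, and the identity is checked by clearing denominators.
-/

open Filter Topology

section RuledSurface

variable {γ w : ℝ → Fin 3 → ℝ} {s t : ℝ}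

def ruledSurface (γ w : ℝ → Fin 3 → ℝ) (s t : ℝ) : Fin 3 → ℝ := γ s + t • w s

lemma pT_ruledSurface (γ w : ℝ → Fin 3 → ℝ) (s t : ℝ) : pT (ruledSurface γ w) s t = w s := by
  have h : HasDerivAt (fun b : ℝ => γ s + b • w s) (w s) t := by
    simpa using ((hasDerivAt_id t).smul_const (w s)).const_add (γ s)
  exact h.deriv

lemma pTT_ruledSurface (γ w : ℝ → Fin 3 → ℝ) (s t : ℝ) : pTT (ruledSurface γ w) s t = 0 := by
  simp only [pTT, pT_ruledSurface, deriv_const]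

lemma pS_ruledSurface (hγ : DifferentiableAt ℝ γ s) (hw : DifferentiableAt ℝ w s) :
    pS (ruledSurface γ w) s t = deriv γ s + t • deriv w s :=
  (hγ.hasDerivAt.add (hw.hasDerivAt.const_smul t)).deriv

lemma pSS_ruledSurface {γ'' w'' : Fin 3 → ℝ} (hγ : ∀ᶠ u in 𝓝 s, DifferentiableAt ℝ γ u)
    (hw : ∀ᶠ u in 𝓝 s, DifferentiableAt ℝ w u) (hγ' : HasDerivAt (deriv γ) γ'' s)
    (hw' : HasDerivAt (deriv w) w'' s) :
    pSS (ruledSurface γ w) s t = γ'' + t • w'' := by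
  have hpS : (fun u => pS (ruledSurface γ w) u t) =ᶠ[𝓝 s] fun u => deriv γ u + t • deriv w u := by
    filter_upwards [hγ, hw] with u hγu hwu using pS_ruledSurface hγu hwu
  rw [pSS, hpS.deriv_eq]
  exact (hγ'.add (hw'.const_smul t)).deriv

end RuledSurface

section FirstFundamentalForm

variable {X : ℝ → ℝ → Fin 3 → ℝ} {s t : ℝ}

lemma disc_eq_coefE (hF : coefF X s t = 0) (hG : coefG X s t = 1) :
    disc X s t = coefE X s t := by
  simp [disc, hF, hG]

lemma solitonEqAt_iff_det3_pSS {v : Fin 3 → ℝ} (hF : coefF X s t = 0) (hG : coefG X s t = 1)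
    (hTT : pTT X s t = 0) (hE : coefE X s t < 0) :
    SolitonEqAt X v s t ↔
      det3 (pS X s t) (pT X s t) (pSS X s t) = coefE X s t * det3 (pS X s t) (pT X s t) v := by
  rw [SolitonEqAt, disc_eq_coefE hF hG, abs_of_neg hE, hF, hG, hTT]
  simp [det3]

end FirstFundamentalForm

section LogCurve

variable {E : Type*} [NormedAddCommGroup E] [NormedSpace ℝ E] {c s : ℝ} {A B C : E}

def logCurve (c : ℝ) (A B C : E) (s : ℝ) : E := Real.log (s - c) • A + (s - c)⁻¹ • B + s • C

lemma hasDerivAt_logCurve (hs : s ≠ c) :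
    HasDerivAt (logCurve c A B C) ((s - c)⁻¹ • A - ((s - c) ^ 2)⁻¹ • B + C) s := by
  have hsc : s - c ≠ 0 := sub_ne_zero.2 hs
  have h1 : HasDerivAt (fun u => u - c) 1 s := (hasDerivAt_id s).sub_const c
  have h := (((h1.log hsc).smul_const A).add ((h1.inv hsc).smul_const B)).add
    ((hasDerivAt_id s).smul_const C)
  exact h.congr_deriv (by simp [sub_eq_add_neg, neg_div])

lemma hasDerivAt_deriv_logCurve (hs : s ≠ c) :
    HasDerivAt (deriv (logCurve c A B C))
      (-((s - c) ^ 2)⁻¹ • A + (2 * ((s - c) ^ 3)⁻¹) • B) s := by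
  have hderiv : deriv (logCurve c A B C) =ᶠ[𝓝 s]
      fun u => (u - c)⁻¹ • A - ((u - c) ^ 2)⁻¹ • B + C := by
    filter_upwards [eventually_ne_nhds hs] with u hu using (hasDerivAt_logCurve hu).deriv
  have hsc : s - c ≠ 0 := sub_ne_zero.2 hs
  have h1 : HasDerivAt (fun u => u - c) 1 s := (hasDerivAt_id s).sub_const c
  have h := (((h1.inv hsc).smul_const A).sub
    (((h1.pow 2).inv (pow_ne_zero 2 hsc)).smul_const B)).add_const C
  refine (h.congr_deriv ?_).congr_of_eventuallyEq hderiv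
  rw [sub_eq_add_neg, ← neg_smul]
  congr 2
  · ring
  · simp only [Pi.pow_apply]
    field_simp
    ring

end LogCurve

lemma hasDerivAt_ruling (u : ℝ) : HasDerivAt (fun s : ℝ => ![1, s, s]) ![0, 1, 1] u := by
  rw [hasDerivAt_pi]
  intro i
  fin_cases i
  · simpa using hasDerivAt_const u (1 : ℝ)
  · simpa using hasDerivAt_id' u
  · simpa using hasDerivAt_id' u

lemma deriv_ruling : deriv (fun s : ℝ => ![1, s, s]) = fun _ => ![0, 1, 1] :=
  funext fun u => (hasDerivAt_ruling u).deriv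

section Ruling

variable {γ : ℝ → Fin 3 → ℝ} {s t : ℝ}

lemma pS_ruledSurface_ruling (hγ : DifferentiableAt ℝ γ s) :
    pS (ruledSurface γ fun s => ![1, s, s]) s t = deriv γ s + t • ![0, 1, 1] := by
  rw [pS_ruledSurface hγ (hasDerivAt_ruling s).differentiableAt, deriv_ruling]

lemma pSS_ruledSurface_ruling (hγ : ∀ᶠ u in 𝓝 s, DifferentiableAt ℝ γ u)
    (hγ' : DifferentiableAt ℝ (deriv γ) s) :
    pSS (ruledSurface γ fun s => ![1, s, s]) s t = deriv (deriv γ) s := by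
  have hw' : HasDerivAt (deriv fun s : ℝ => ![1, s, s]) 0 s := by
    rw [deriv_ruling]
    exact hasDerivAt_const s _
  rw [pSS_ruledSurface hγ (.of_forall fun u => (hasDerivAt_ruling u).differentiableAt)
    hγ'.hasDerivAt hw', smul_zero, add_zero]

lemma coefF_ruledSurface_ruling (hγ : DifferentiableAt ℝ γ s) :
    coefF (ruledSurface γ fun s => ![1, s, s]) s t = mink (deriv γ s) ![1, s, s] := by
  simp only [coefF, pS_ruledSurface_ruling hγ, pT_ruledSurface, mink, Pi.add_apply, Pi.smul_apply, smul_eq_mul, Matrix.cons_val_zero,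
    Matrix.cons_val_one, Matrix.cons_val_two, Matrix.head_cons, Matrix.tail_cons]
  ring

lemma coefG_ruledSurface_ruling (γ : ℝ → Fin 3 → ℝ) (s t : ℝ) :
    coefG (ruledSurface γ fun s => ![1, s, s]) s t = 1 := by
  simp [coefG, pT_ruledSurface, mink]

end Ruling

def solitonCurve (v₂ b : ℝ) : ℝ → Fin 3 → ℝ :=
  logCurve v₂ ![1, v₂, v₂] ![-v₂, (1 - v₂ ^ 2) / 2, -(1 + v₂ ^ 2) / 2] ![0, b, b]

lemma solitonCurve_apply (v₂ b s : ℝ) :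
    solitonCurve v₂ b s =
      ![Real.log (s - v₂) - v₂ / (s - v₂),
        v₂ * Real.log (s - v₂) - (1 + v₂ ^ 2) / (2 * (s - v₂)) + b * s + 1 / (s - v₂),
        v₂ * Real.log (s - v₂) - (1 + v₂ ^ 2) / (2 * (s - v₂)) + b * s] := by
  ext i
  fin_cases i <;>
    simp only [solitonCurve, logCurve, div_eq_mul_inv, mul_inv, Fin.zero_eta, Fin.mk_one,
      Fin.reduceFinMk, Pi.add_apply, Pi.smul_apply, smul_eq_mul, Matrix.cons_val] <;>
    ring

section SolitonCurve

variable {v₂ b s : ℝ}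

lemma mink_deriv_solitonCurve_ruling (hs : s ≠ v₂) :
    mink (deriv (solitonCurve v₂ b) s) ![1, s, s] = 0 := by
  have hsc : s - v₂ ≠ 0 := sub_ne_zero.2 hs
  rw [solitonCurve, (hasDerivAt_logCurve hs).deriv]
  simp only [mink, Pi.add_apply, Pi.sub_apply, Pi.smul_apply, smul_eq_mul, Matrix.cons_val_zero,
    Matrix.cons_val_one, Matrix.cons_val_two, Matrix.head_cons, Matrix.tail_cons]
  field_simp
  ring

lemma det3_solitonCurve (hs : s ≠ v₂) (t : ℝ) :
    det3 (deriv (solitonCurve v₂ b) s + t • ![0, 1, 1]) ![1, s, s]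
        (deriv (deriv (solitonCurve v₂ b)) s) =
      mink (deriv (solitonCurve v₂ b) s + t • ![0, 1, 1])
          (deriv (solitonCurve v₂ b) s + t • ![0, 1, 1]) *
        det3 (deriv (solitonCurve v₂ b) s + t • ![0, 1, 1]) ![1, s, s] ![1, v₂, v₂] := by
  have hsc : s - v₂ ≠ 0 := sub_ne_zero.2 hs
  rw [solitonCurve, (hasDerivAt_deriv_logCurve hs).deriv, (hasDerivAt_logCurve hs).deriv]
  simp only [mink, det3, Pi.add_apply, Pi.sub_apply, Pi.smul_apply, smul_eq_mul, Matrix.cons_val_zero,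
    Matrix.cons_val_one, Matrix.cons_val_two, Matrix.head_cons, Matrix.tail_cons]
  field_simp
  ring

end SolitonCurve

/-- Theorem 4, case `v = (1,v₂,v₂)`, `ε = 1`, `Φ = 1/(s−v₂)`: with
`Φ(s) = 1/(s−v₂)`, `x(s) = log(s−v₂) − v₂/(s−v₂)`,
`z(s) = v₂·log(s−v₂) − (1+v₂²)/(2(s−v₂)) + bs` and `γ = (x, z+Φ, z)`, the ruled surface
`X(s,t) = γ(s) + t(1,s,s)` satisfies `⟨γ',(1,s,s)⟩ = 0`, and at every `(s,t)` with
`s > v₂` and `E = ⟨X_s,X_s⟩ < 0` it is non-degenerate with `EG − F² = E < 0` and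
satisfies the translating soliton equation with respect to `v = (1,v₂,v₂)`. -/
theorem stmt16 (v₂ b : ℝ) (Φ x z : ℝ → ℝ) (γ : ℝ → Fin 3 → ℝ)
    (hΦ : Φ = fun s => 1 / (s - v₂))
    (hx : x = fun s => Real.log (s - v₂) - v₂ / (s - v₂))
    (hz : z = fun s =>
      v₂ * Real.log (s - v₂) - (1 + v₂ ^ 2) / (2 * (s - v₂)) + b * s)
    (hγ : γ = fun s => ![x s, z s + Φ s, z s]) :
    (∀ s : ℝ, v₂ < s → mink (deriv γ s) ![1, s, s] = 0) ∧
    (∀ s t : ℝ, v₂ < s →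
      coefE (fun s t => γ s + t • ![1, s, s]) s t < 0 →
        disc (fun s t => γ s + t • ![1, s, s]) s t
            = coefE (fun s t => γ s + t • ![1, s, s]) s t ∧
        disc (fun s t => γ s + t • ![1, s, s]) s t < 0 ∧
        SolitonEqAt (fun s t => γ s + t • ![1, s, s]) ![1, v₂, v₂] s t) := by
  obtain rfl : γ = solitonCurve v₂ b := by
    subst hΦ hx hz hγ
    exact funext fun s => (solitonCurve_apply v₂ b s).symm
  refine ⟨fun s hs => mink_deriv_solitonCurve_ruling hs.ne', fun s t hs hE => ?_⟩
  rw [show (fun s t => solitonCurve v₂ b s + t • ![1, s, s]) =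
    ruledSurface (solitonCurve v₂ b) fun s => ![1, s, s] from rfl] at hE ⊢
  have hγ : ∀ᶠ u in 𝓝 s, DifferentiableAt ℝ (solitonCurve v₂ b) u :=
    (eventually_ne_nhds hs.ne').mono fun u hu => (hasDerivAt_logCurve hu).differentiableAt
  have hF := (coefF_ruledSurface_ruling (t := t) hγ.self_of_nhds).trans
    (mink_deriv_solitonCurve_ruling hs.ne')
  have hG := coefG_ruledSurface_ruling (solitonCurve v₂ b) s t
  have hdisc := disc_eq_coefE hF hG
  refine ⟨hdisc, hdisc ▸ hE, ?_⟩
  rw [solitonEqAt_iff_det3_pSS hF hG (pTT_ruledSurface _ _ _ _) hE,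
    pSS_ruledSurface_ruling hγ (hasDerivAt_deriv_logCurve hs.ne').differentiableAt, coefE,
    pS_ruledSurface_ruling hγ.self_of_nhds, pT_ruledSurface]
  exact det3_solitonCurve hs.ne' t
end
end
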